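/- arXiv:2105.13512 — 6 statements merged into one kernel-verified Lean document; each statement's English description precedes it below -/
import Mathlib

section
/- Let $d \ge 1$ be an integer, $\tau > 0$, and $0 < r < \pi\tau$. Then $\frac{2\pi^{d/2}}{\Gamma(d/2)} \int_0^r \left(\frac{\tau}{\sqrt{2}} \sinh\left(\frac{\sqrt{2}\,x}{\tau}\right)\right)^{d-1} dx \;\le\; \omega_d \left(1 + \frac{2\sqrt{2}\,r}{\tau}\right)^{d-1} r^d$, i.e., the volume of a geodesic ball of radius $r$ in the $d$-dimensional hyperbolic space of constant sectional curvature $-2/\tau^2$ is at most $\omega_d (1 + \frac{2\sqrt{2}r}{\tau})^{d-1} r^d$. -/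
open Real intervalIntegral

private lemma convexOn_sinh' : ConvexOn ℝ (Set.Ici (0:ℝ)) Real.sinh := by
  apply convexOn_of_deriv2_nonneg (convex_Ici 0) Real.continuous_sinh.continuousOn
  · exact Real.differentiable_sinh.differentiableOn
  · rw [Real.deriv_sinh]; exact Real.differentiable_cosh.differentiableOn
  · intro x hx
    rw [interior_Ici] at hx
    have : deriv^[2] Real.sinh = Real.sinh := by
      show deriv (deriv^[1] Real.sinh) = Real.sinh
      simp [Real.deriv_sinh, Real.deriv_cosh]
    rw [this]
    exact (Real.sinh_pos_iff.mpr hx).le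

private lemma sinh_chord {b t : ℝ} (hb : 0 < b) (h0 : 0 ≤ t) (htb : t ≤ b) :
    Real.sinh t ≤ t / b * Real.sinh b := by
  have h := convexOn_sinh'.2 (Set.self_mem_Ici) (Set.mem_Ici.mpr hb.le)
    (show (0:ℝ) ≤ 1 - t / b by rw [sub_nonneg]; exact div_le_one_of_le₀ htb hb.le)
    (show (0:ℝ) ≤ t / b from div_nonneg h0 hb.le) (by ring)
  simpa [smul_eq_mul, div_mul_cancel₀, hb.ne', Real.sinh_zero] using h

private lemma exp_ub {x : ℝ} (h1 : 0 ≤ x) (h2 : x ≤ 1) :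
    Real.exp x ≤ 1 + x + x^2/2 + x^3/6 + x^4/24 + x^5/120 + x^6*7/4320 := by
  have h := Real.exp_bound' h1 h2 (n := 6) (by norm_num)
  simp only [Finset.sum_range_succ, Finset.sum_range_zero, Nat.factorial] at h
  norm_num at h
  linarith

private lemma exp_445 : Real.exp 4.45 ≤ 85.63 := by
  have h1 : Real.exp (4.45:ℝ) =
      Real.exp 1 * Real.exp 1 * Real.exp 1 * Real.exp 1 * Real.exp 0.45 := by
    rw [← Real.exp_add, ← Real.exp_add, ← Real.exp_add, ← Real.exp_add]; norm_num
  have he : Real.exp 1 ≤ 2.7182818286 := Real.exp_one_lt_d9.le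
  have h0 : Real.exp (0.45:ℝ) ≤ 1.5683134 := by
    have := exp_ub (x := 0.45) (by norm_num) (by norm_num)
    norm_num at this ⊢; linarith
  rw [h1]
  calc Real.exp 1 * Real.exp 1 * Real.exp 1 * Real.exp 1 * Real.exp 0.45
      ≤ 2.7182818286 * 2.7182818286 * 2.7182818286 * 2.7182818286 * 1.5683134 := by
        gcongr <;> positivity
    _ ≤ 85.63 := by norm_num

private lemma exp_432 : Real.exp 4.32 ≤ 75.19 := by
  have h1 : Real.exp (4.32:ℝ) =
      Real.exp 1 * Real.exp 1 * Real.exp 1 * Real.exp 1 * Real.exp 0.32 := by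
    rw [← Real.exp_add, ← Real.exp_add, ← Real.exp_add, ← Real.exp_add]; norm_num
  have he : Real.exp 1 ≤ 2.7182818286 := Real.exp_one_lt_d9.le
  have h0 : Real.exp (0.32:ℝ) ≤ 1.3771281 := by
    have := exp_ub (x := 0.32) (by norm_num) (by norm_num)
    norm_num at this ⊢; linarith
  rw [h1]
  calc Real.exp 1 * Real.exp 1 * Real.exp 1 * Real.exp 1 * Real.exp 0.32
      ≤ 2.7182818286 * 2.7182818286 * 2.7182818286 * 2.7182818286 * 1.3771281 := by
        gcongr <;> positivity
    _ ≤ 75.19 := by norm_num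

private lemma exp_386 : Real.exp 3.86 ≤ 47.47 := by
  have h1 : Real.exp (3.86:ℝ) = Real.exp 1 * Real.exp 1 * Real.exp 1 * Real.exp 0.86 := by
    rw [← Real.exp_add, ← Real.exp_add, ← Real.exp_add]; norm_num
  have he : Real.exp 1 ≤ 2.7182818286 := Real.exp_one_lt_d9.le
  have h0 : Real.exp (0.86:ℝ) ≤ 2.3631772 := by
    have := exp_ub (x := 0.86) (by norm_num) (by norm_num)
    norm_num at this ⊢; linarith
  rw [h1]
  calc Real.exp 1 * Real.exp 1 * Real.exp 1 * Real.exp 0.86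
      ≤ 2.7182818286 * 2.7182818286 * 2.7182818286 * 2.3631772 := by
        gcongr <;> positivity
    _ ≤ 47.47 := by norm_num

private lemma exp_258 : Real.exp 2.58 ≤ 13.198 := by
  have h1 : Real.exp (2.58:ℝ) = Real.exp 1 * Real.exp 1 * Real.exp 0.58 := by
    rw [← Real.exp_add, ← Real.exp_add]; norm_num
  have he : Real.exp 1 ≤ 2.7182818286 := Real.exp_one_lt_d9.le
  have h0 : Real.exp (0.58:ℝ) ≤ 1.7860426 := by
    have := exp_ub (x := 0.58) (by norm_num) (by norm_num)
    norm_num at this ⊢; linarith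
  rw [h1]
  calc Real.exp 1 * Real.exp 1 * Real.exp 0.58
      ≤ 2.7182818286 * 2.7182818286 * 1.7860426 := by gcongr <;> positivity
    _ ≤ 13.198 := by norm_num

private lemma sinh_key {t : ℝ} (h0 : 0 ≤ t) (h1 : t ≤ 4.45) :
    Real.sinh t ≤ t + 2 * t ^ 2 := by
  have hse : ∀ b : ℝ, Real.sinh b ≤ Real.exp b / 2 := fun b => by
    rw [Real.sinh_eq]; have := (Real.exp_pos (-b)).le; linarith
  have chord : ∀ b M : ℝ, 0 < b → t ≤ b → Real.exp b ≤ M →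
      Real.sinh t ≤ t * (M / (2 * b)) := by
    intro b M hb htb hM
    calc Real.sinh t ≤ t / b * Real.sinh b := sinh_chord hb h0 htb
      _ ≤ t / b * (M / 2) := by
          apply mul_le_mul_of_nonneg_left ((hse b).trans (by linarith)) (by positivity)
      _ = t * (M / (2 * b)) := by ring
  rcases le_or_gt t 1 with hc | hc
  · have hub := Real.exp_bound' h0 hc (n := 2) (by norm_num)
    simp only [Finset.sum_range_succ, Finset.sum_range_zero, Nat.factorial] at hub
    norm_num at hub
    have hlb : 1 + (-t) ≤ Real.exp (-t) := by linarith [Real.add_one_le_exp (-t)]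
    rw [Real.sinh_eq]
    nlinarith
  · rcases le_or_gt t 2.58 with hc2 | hc2
    · have h := chord 2.58 13.198 (by norm_num) hc2 exp_258
      nlinarith
    · rcases le_or_gt t 3.86 with hc3 | hc3
      · have h := chord 3.86 47.47 (by norm_num) hc3 exp_386
        nlinarith
      · rcases le_or_gt t 4.32 with hc4 | hc4
        · have h := chord 4.32 75.19 (by norm_num) hc4 exp_432
          nlinarith
        · have h := chord 4.45 85.63 (by norm_num) h1 exp_445
          nlinarith

/-- The volume `ω_d` of the `d`-dimensional Euclidean unit ball. -/
noncomputable def unitBallVol (d : ℕ) : ℝ :=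
  Real.pi ^ ((d : ℝ) / 2) / Real.Gamma ((d : ℝ) / 2 + 1)

/-- The volume of a geodesic ball of radius `r < πτ` in the `d`-dimensional hyperbolic space of
constant sectional curvature `-2/τ²` is at most `ω_d (1 + 2√2 r/τ)^{d-1} r^d`. -/
theorem hyperbolic_ball_volume_upper_bound
    (d : ℕ) (hd : 1 ≤ d) (τ r : ℝ) (hτ : 0 < τ) (hr0 : 0 < r) (hrπ : r < Real.pi * τ) :
    (2 * Real.pi ^ ((d : ℝ) / 2) / Real.Gamma ((d : ℝ) / 2)) *
        ∫ x in (0 : ℝ)..r, ((τ / Real.sqrt 2) * Real.sinh (Real.sqrt 2 * x / τ)) ^ (d - 1)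
      ≤ unitBallVol d * (1 + 2 * Real.sqrt 2 * r / τ) ^ (d - 1) * r ^ d := by
  have hs2pos : (0:ℝ) < Real.sqrt 2 := Real.sqrt_pos.mpr (by norm_num)
  have hs2lt : Real.sqrt 2 < 1.4142136 := by
    rw [show (1.4142136:ℝ) = Real.sqrt (1.4142136^2) by
      rw [Real.sqrt_sq]; norm_num]
    exact Real.sqrt_lt_sqrt (by norm_num) (by norm_num)
  have hπlt : Real.pi < 3.141593 := Real.pi_lt_d6
  set c : ℝ := 1 + 2 * Real.sqrt 2 * r / τ with hc
  have hcpos : 0 < c := by positivity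
  have htop : Real.sqrt 2 * r / τ ≤ 4.45 := by
    have h1 : Real.sqrt 2 * r < Real.sqrt 2 * (Real.pi * τ) := by
      exact mul_lt_mul_of_pos_left hrπ hs2pos
    have h2 : Real.sqrt 2 * Real.pi ≤ 4.45 := by
      nlinarith [Real.pi_pos, Real.sqrt_nonneg 2]
    rw [div_le_iff₀ hτ]
    nlinarith [Real.pi_pos]
  -- pointwise bound
  have key : ∀ x ∈ Set.Icc (0:ℝ) r,
      ((τ / Real.sqrt 2) * Real.sinh (Real.sqrt 2 * x / τ)) ^ (d-1) ≤ (c * x) ^ (d-1) := by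
    intro x hx
    obtain ⟨hx0, hxr⟩ := hx
    set t : ℝ := Real.sqrt 2 * x / τ with htdef
    have ht0 : 0 ≤ t := by positivity
    have htr : t ≤ Real.sqrt 2 * r / τ := by
      rw [htdef]; gcongr
    have hs := sinh_key ht0 (htr.trans htop)
    clear_value t
    have hbase : (τ / Real.sqrt 2) * Real.sinh t ≤ c * x := by
      have h1 : Real.sinh t ≤ t * c := by
        have : t * (1 + 2 * t) ≤ t * c := by
          apply mul_le_mul_of_nonneg_left _ ht0
          rw [hc, show 2 * Real.sqrt 2 * r / τ = 2 * (Real.sqrt 2 * r / τ) by ring]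
          linarith
        nlinarith
      calc (τ / Real.sqrt 2) * Real.sinh t ≤ (τ / Real.sqrt 2) * (t * c) := by
            apply mul_le_mul_of_nonneg_left h1 (by positivity)
        _ = c * x := by
            rw [htdef]; field_simp
    have hnn : 0 ≤ (τ / Real.sqrt 2) * Real.sinh t :=
      mul_nonneg (by positivity) (by rwa [Real.sinh_nonneg_iff])
    exact pow_le_pow_left₀ hnn hbase _
  have hint1 : IntervalIntegrable
      (fun x => ((τ / Real.sqrt 2) * Real.sinh (Real.sqrt 2 * x / τ)) ^ (d-1))
      MeasureTheory.volume 0 r := by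
    apply Continuous.intervalIntegrable; fun_prop
  have hint2 : IntervalIntegrable (fun x => (c * x) ^ (d-1)) MeasureTheory.volume 0 r := by
    apply Continuous.intervalIntegrable; fun_prop
  have hmono := intervalIntegral.integral_mono_on hr0.le hint1 hint2 key
  have hval : (∫ x in (0:ℝ)..r, (c * x) ^ (d-1)) = c ^ (d-1) * (r ^ d / d) := by
    simp_rw [mul_pow]
    rw [intervalIntegral.integral_const_mul, integral_pow]
    have hcast : ((d - 1 : ℕ) : ℝ) + 1 = d := by
      have := Nat.succ_pred_eq_of_pos hd
      exact_mod_cast this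
    have hd1 : d - 1 + 1 = d := Nat.succ_pred_eq_of_pos hd
    rw [hd1, hcast, zero_pow (by omega : d ≠ 0)]
    ring
  have hA : 0 < 2 * Real.pi ^ ((d : ℝ) / 2) / Real.Gamma ((d : ℝ) / 2) := by
    have h1 : 0 < Real.Gamma ((d : ℝ) / 2) := by
      apply Real.Gamma_pos_of_pos
      have : (1:ℝ) ≤ (d:ℝ) := by exact_mod_cast hd
      linarith
    have h2 : (0:ℝ) < Real.pi ^ ((d : ℝ) / 2) :=
      Real.rpow_pos_of_pos Real.pi_pos _
    positivity
  calc (2 * Real.pi ^ ((d : ℝ) / 2) / Real.Gamma ((d : ℝ) / 2)) *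
        ∫ x in (0 : ℝ)..r, ((τ / Real.sqrt 2) * Real.sinh (Real.sqrt 2 * x / τ)) ^ (d - 1)
      ≤ (2 * Real.pi ^ ((d : ℝ) / 2) / Real.Gamma ((d : ℝ) / 2)) *
        ∫ x in (0 : ℝ)..r, (c * x) ^ (d - 1) := by
        exact mul_le_mul_of_nonneg_left hmono hA.le
    _ = unitBallVol d * c ^ (d-1) * r ^ d := by
        rw [hval, unitBallVol]
        have hdo : ((d:ℝ)/2) ≠ 0 := by
          have : (1:ℝ) ≤ (d:ℝ) := by exact_mod_cast hd
          intro h; rw [div_eq_zero_iff] at h; rcases h with h|h <;> linarith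
        rw [Real.Gamma_add_one hdo]
        have hΓ : Real.Gamma ((d : ℝ) / 2) ≠ 0 := by
          have : (1:ℝ) ≤ (d:ℝ) := by exact_mod_cast hd
          exact (Real.Gamma_pos_of_pos (by linarith)).ne'
        have hdne : (d:ℝ) ≠ 0 := Nat.cast_ne_zero.mpr (by omega)
        field_simp
end

section
/- For all real $x$ with $0 < x < \sqrt{2}\,\pi$, one has $\sinh(x) \le x(1 + 2x)$, equivalently $\frac{\sinh(x)}{x} \le 1 + 2x$. -/
/-!
For `x ≤ 1` the second-order Taylor bound `exp x ≤ 1 + x + x²` together with `1 - x ≤ exp (-x)`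
gives `sinh x ≤ x + x² / 2`. For `1 ≤ x < √2 π < 4.45` it suffices that `exp x ≤ 2x + 4x²`; since
`exp` is convex it lies below its chords, and on each of `[1, 3.5]` and `[3.5, 4.5]` the chord
through upper bounds for `exp` at the endpoints stays below `2x + 4x²` up to `4.45`.
-/

open Real

theorem ConvexOn.sub_mul_le_chord {𝕜 : Type*} [Field 𝕜] [LinearOrder 𝕜] [IsStrictOrderedRing 𝕜]
    {s : Set 𝕜} {f : 𝕜 → 𝕜} (hf : ConvexOn 𝕜 s f) {x y z : 𝕜} (hx : x ∈ s) (hz : z ∈ s)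
    (hxy : x ≤ y) (hyz : y ≤ z) : (z - x) * f y ≤ (z - y) * f x + (y - x) * f z := by
  rcases hxy.eq_or_lt with rfl | hxy
  · simp
  rcases hyz.eq_or_lt with rfl | hyz
  · simp
  exact hf.secant_mono_aux1 hx hz hxy hyz

theorem Real.sub_mul_exp_le_chord {a b x A B : ℝ} (hax : a ≤ x) (hxb : x ≤ b)
    (hA : exp a ≤ A) (hB : exp b ≤ B) : (b - a) * exp x ≤ (b - x) * A + (x - a) * B := by
  have hchord := convexOn_exp.sub_mul_le_chord (Set.mem_univ a) (Set.mem_univ b) hax hxb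
  have hA' := mul_le_mul_of_nonneg_left hA (sub_nonneg.2 hxb)
  have hB' := mul_le_mul_of_nonneg_left hB (sub_nonneg.2 hax)
  linarith

theorem Real.exp_half_lt_of_lt_sq {n : ℕ} {c : ℝ} (hc : 0 ≤ c) (h : 2.7182818286 ^ n < c ^ 2) :
    exp (n / 2) < c := by
  rw [← pow_lt_pow_iff_left₀ (exp_pos _).le hc two_ne_zero, ← exp_nat_mul]
  calc exp (2 * (n / 2)) = exp 1 ^ n := by rw [← exp_nat_mul]; ring_nf
    _ ≤ 2.7182818286 ^ n := by gcongr; exact exp_one_lt_d9.le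
    _ < c ^ 2 := h

theorem Real.exp_three_point_five_lt : exp 3.5 < 33.12 := by
  convert exp_half_lt_of_lt_sq (n := 7) (c := 33.12) (by norm_num) (by norm_num) using 2
  norm_num

theorem Real.exp_four_point_five_lt : exp 4.5 < 90.02 := by
  convert exp_half_lt_of_lt_sq (n := 9) (c := 90.02) (by norm_num) (by norm_num) using 2
  norm_num

theorem Real.sqrt_two_mul_pi_lt : √2 * π < 4.45 := by
  have hsqrt : √2 < 1.415 := (sqrt_lt' (by norm_num)).2 (by norm_num)
  calc √2 * π < 1.415 * 3.1416 := mul_lt_mul'' hsqrt pi_lt_d4 (sqrt_nonneg _) pi_pos.le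
    _ < 4.45 := by norm_num

theorem Real.sinh_le_self_add_sq_div_two {x : ℝ} (hx : |x| ≤ 1) : sinh x ≤ x + x ^ 2 / 2 := by
  have hexp : exp x ≤ 1 + x + x ^ 2 := by
    linarith [(abs_le.1 (abs_exp_sub_one_sub_id_le hx)).2]
  have hexp_neg : 1 - x ≤ exp (-x) := by linarith [add_one_le_exp (-x)]
  rw [sinh_eq]
  linarith

theorem Real.exp_le_two_mul_add_four_mul_sq {x : ℝ} (h1 : 1 ≤ x) (h2 : x ≤ 4.45) :
    exp x ≤ 2 * x + 4 * x ^ 2 := by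
  rcases le_total x 3.5 with h | h
  · have hchord := sub_mul_exp_le_chord h1 h exp_one_lt_d9.le exp_three_point_five_lt.le
    -- the convex gap between `2x + 4x²` and this chord is smallest near `x = 1.27`
    nlinarith [sq_nonneg (x - 1.27)]
  · have hchord := sub_mul_exp_le_chord h (h2.trans (by norm_num))
      exp_three_point_five_lt.le exp_four_point_five_lt.le
    nlinarith [mul_nonneg (sub_nonneg.2 h2) (sub_nonneg.2 h)]

/-- For `0 < x < √2 π`, one has `sinh(x) ≤ x(1 + 2x)`, equivalently `sinh(x)/x ≤ 1 + 2x`. -/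
theorem sinh_le_of_lt_sqrt_two_mul_pi (x : ℝ) (hx0 : 0 < x) (hx : x < Real.sqrt 2 * Real.pi) :
    Real.sinh x ≤ x * (1 + 2 * x) ∧ Real.sinh x / x ≤ 1 + 2 * x := by
  have hsinh : sinh x ≤ x * (1 + 2 * x) := by
    rcases le_total x 1 with h1 | h1
    · have hsmall := sinh_le_self_add_sq_div_two (abs_le.2 ⟨by linarith, h1⟩)
      nlinarith
    · have hexp := exp_le_two_mul_add_four_mul_sq h1 (hx.trans sqrt_two_mul_pi_lt).le
      have hsinh_lt : sinh x < exp x / 2 := by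
        rw [sinh_eq]
        linarith [exp_pos (-x)]
      linarith
  exact ⟨hsinh, (div_le_iff₀ hx0).2 (by linarith)⟩
end

section
/- Given integers $0 < s < n$ with $s$ even, there exist $N \ge \left(\frac{n}{2s}\right)^{s/4}$ subsets $S_1, \dots, S_N$ of $\{1, \dots, n\}$ such that $|S_j| = s/2$ for all $j$ and $|S_j \cap S_k| < \frac{s}{4}$ whenever $j \ne k$. -/
/-!
Take `k = s / 2`, `t = ⌈s / 4⌉` and a maximal family `F` of `k`-subsets of `[n]` whose pairwise
intersections have fewer than `t` elements. By maximality every `k`-set meets some member of `F`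
in at least `t` points, while at most `C(k, t) C(n - t, k - t)` of the `k`-sets meet a given
member in that many points; hence `C(n, k) ≤ |F| C(k, t) C(n - t, k - t)`. Since
`C(n, k) / C(n - t, k - t) ≥ (n / k)^t` and `C(k, t) ≤ 2^k`, this gives
`|F| ≥ (n / k)^t / 2^k ≥ (n / 2s)^(s / 4)`.
-/

open Finset

theorem Finset.exists_maximal_pairwise_subset {α : Type*} [DecidableEq α] (U : Finset α)
    {r : α → α → Prop} (hr : ∀ a b, r a b → r b a) :
    ∃ F ⊆ U, (F : Set α).Pairwise r ∧ ∀ b ∈ U, b ∉ F → ∃ a ∈ F, ¬ r a b := by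
  have hfin : {F : Finset α | F ⊆ U ∧ (F : Set α).Pairwise r}.Finite :=
    U.powerset.finite_toSet.subset fun F hF => mem_coe.2 (mem_powerset.2 hF.1)
  obtain ⟨F, ⟨hFU, hF⟩, hmax⟩ := hfin.exists_maximal ⟨∅, empty_subset U, by simp⟩
  refine ⟨F, hFU, hF, fun b hbU hbF => ?_⟩
  by_contra! hb
  have hins : insert b F ⊆ U ∧ ((insert b F : Finset α) : Set α).Pairwise r := by
    refine ⟨insert_subset hbU hFU, ?_⟩
    rw [coe_insert, Set.pairwise_insert]
    exact ⟨hF, fun a ha _ => ⟨hr a b (hb a ha), hb a ha⟩⟩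
  exact hbF (hmax hins (subset_insert b F) (mem_insert_self b F))

theorem card_filter_le_card_inter_le {α : Type*} [Fintype α] [DecidableEq α] (A : Finset α)
    (k t : ℕ) :
    #{B ∈ powersetCard k univ | t ≤ #(A ∩ B)} ≤
      (#A).choose t * (Fintype.card α - t).choose (k - t) := by
  calc #{B ∈ powersetCard k univ | t ≤ #(A ∩ B)}
      ≤ #((A.powersetCard t).biUnion
          fun T => ((univ \ T).powersetCard (k - t)).image (T ∪ ·)) := by
        refine card_le_card fun B hB => ?_
        simp only [mem_filter, mem_powersetCard, subset_univ, true_and] at hB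
        obtain ⟨T, hTAB, hT⟩ := exists_subset_card_eq hB.2
        have hTB : T ⊆ B := hTAB.trans inter_subset_right
        refine mem_biUnion.2 ⟨T, mem_powersetCard.2 ⟨hTAB.trans inter_subset_left, hT⟩,
          mem_image.2 ⟨B \ T, mem_powersetCard.2
            ⟨sdiff_subset_sdiff (subset_univ B) le_rfl, ?_⟩, union_sdiff_of_subset hTB⟩⟩
        rw [card_sdiff_of_subset hTB, hB.1, hT]
    _ ≤ #(A.powersetCard t) * (Fintype.card α - t).choose (k - t) :=
        card_biUnion_le_card_mul _ _ _ fun T hT => card_image_le.trans <| by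
          rw [card_powersetCard, card_univ_sdiff, (mem_powersetCard.1 hT).2]
    _ = _ := by rw [card_powersetCard]

theorem choose_le_card_mul_of_forall_exists_le_card_inter {α : Type*} [Fintype α]
    [DecidableEq α] {F : Finset (Finset α)} {k t : ℕ} (hF : ∀ A ∈ F, #A = k)
    (hcover : ∀ B : Finset α, #B = k → ∃ A ∈ F, t ≤ #(A ∩ B)) :
    (Fintype.card α).choose k ≤ #F * (k.choose t * (Fintype.card α - t).choose (k - t)) := by
  calc (Fintype.card α).choose k = #(powersetCard k (univ : Finset α)) := by
        rw [card_powersetCard, card_univ]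
    _ ≤ #(F.biUnion fun A => {B ∈ powersetCard k univ | t ≤ #(A ∩ B)}) := by
        refine card_le_card fun B hB => ?_
        obtain ⟨A, hA, hAB⟩ := hcover B (mem_powersetCard.1 hB).2
        exact mem_biUnion.2 ⟨A, hA, mem_filter.2 ⟨hB, hAB⟩⟩
    _ ≤ _ := card_biUnion_le_card_mul _ _ _ fun A hA => by
        simpa only [hF A hA] using card_filter_le_card_inter_le A k t

theorem Nat.pow_mul_descFactorial_le_pow_mul_descFactorial {n k : ℕ} (hkn : k ≤ n) (t : ℕ) :
    n ^ t * k.descFactorial t ≤ k ^ t * n.descFactorial t := by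
  induction t with
  | zero => simp
  | succ t ih =>
    have hstep : n * (k - t) ≤ k * (n - t) := by
      rw [Nat.mul_sub, Nat.mul_sub, Nat.mul_comm n k]
      exact Nat.sub_le_sub_left (Nat.mul_le_mul_right t hkn) _
    calc n ^ (t + 1) * k.descFactorial (t + 1) = n * (k - t) * (n ^ t * k.descFactorial t) := by
          rw [descFactorial_succ]; ring
      _ ≤ k * (n - t) * (k ^ t * n.descFactorial t) := Nat.mul_le_mul hstep ih
      _ = k ^ (t + 1) * n.descFactorial (t + 1) := by rw [descFactorial_succ]; ring

theorem Nat.pow_mul_choose_sub_le_pow_mul_choose {n k t : ℕ} (hkn : k ≤ n) (htk : t ≤ k) :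
    n ^ t * (n - t).choose (k - t) ≤ k ^ t * n.choose k := by
  refine Nat.le_of_mul_le_mul_right ?_ (descFactorial_pos.2 htk)
  calc n ^ t * (n - t).choose (k - t) * k.descFactorial t
      = n ^ t * k.descFactorial t * (n - t).choose (k - t) := by ring
    _ ≤ k ^ t * n.descFactorial t * (n - t).choose (k - t) :=
        Nat.mul_le_mul_right _ (pow_mul_descFactorial_le_pow_mul_descFactorial hkn t)
    _ = k ^ t * (n.choose t * (n - t).choose (k - t)) * t.factorial := by
        rw [descFactorial_eq_factorial_mul_choose]; ring
    _ = k ^ t * n.choose k * k.descFactorial t := by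
        rw [← choose_mul htk, descFactorial_eq_factorial_mul_choose]; ring

theorem Nat.pow_le_of_choose_le_mul {n k t m : ℕ} (hkn : k ≤ n) (htk : t ≤ k)
    (h : n.choose k ≤ m * (k.choose t * (n - t).choose (k - t))) :
    n ^ t ≤ k ^ t * 2 ^ k * m := by
  refine Nat.le_of_mul_le_mul_right ?_ (Nat.choose_pos (Nat.sub_le_sub_right hkn t))
  calc n ^ t * (n - t).choose (k - t) ≤ k ^ t * n.choose k :=
        pow_mul_choose_sub_le_pow_mul_choose hkn htk
    _ ≤ k ^ t * (m * (k.choose t * (n - t).choose (k - t))) := by gcongr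
    _ ≤ k ^ t * (m * (2 ^ k * (n - t).choose (k - t))) := by
        gcongr; exact choose_le_two_pow k t
    _ = k ^ t * 2 ^ k * m * (n - t).choose (k - t) := by ring

theorem div_rpow_half_le_of_pow_le {n k t N : ℕ} (hk : 0 < k) (hkn : k ≤ n) (hkt : k ≤ 2 * t)
    (h : n ^ t ≤ k ^ t * 2 ^ k * N) : ((n : ℝ) / (4 * k)) ^ ((k : ℝ) / 2) ≤ N := by
  have hk' : (0 : ℝ) < k := by exact_mod_cast hk
  have hx : (1 : ℝ) ≤ n / k := by rw [one_le_div hk']; exact_mod_cast hkn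
  have hfour : (4 : ℝ) ^ ((k : ℝ) / 2) = 2 ^ k := by
    rw [show (4 : ℝ) = 2 ^ (2 : ℝ) by norm_num, ← Real.rpow_mul (by norm_num),
      mul_div_cancel₀ _ two_ne_zero, Real.rpow_natCast]
  have hpow : ((n : ℝ) / k) ^ t ≤ 2 ^ k * N := by
    rw [div_pow, div_le_iff₀ (by positivity)]
    calc (n : ℝ) ^ t ≤ k ^ t * 2 ^ k * N := by exact_mod_cast h
      _ = 2 ^ k * N * k ^ t := by ring
  rw [mul_comm, ← div_div, Real.div_rpow (by positivity) (by norm_num), hfour,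
    div_le_iff₀ (by positivity), mul_comm]
  calc ((n : ℝ) / k) ^ ((k : ℝ) / 2) ≤ ((n : ℝ) / k) ^ (t : ℝ) :=
        Real.rpow_le_rpow_of_exponent_le hx <| by
          rw [div_le_iff₀ two_pos]; exact_mod_cast (by omega : k ≤ t * 2)
    _ ≤ 2 ^ k * N := by rwa [Real.rpow_natCast]

/-- Given even `0 < s < n`, there exist `N ≥ (n/2s)^{s/4}` subsets `S_1, …, S_N` of
`{1, …, n}`, each of cardinality `s/2`, with pairwise intersections of cardinality `< s/4`. -/
theorem exists_many_almost_disjoint_subsets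
    (s n : ℕ) (hs : 0 < s) (hsn : s < n) (hse : Even s) :
    ∃ N : ℕ, ((n : ℝ) / (2 * s)) ^ ((s : ℝ) / 4) ≤ (N : ℝ) ∧
      ∃ S : Fin N → Finset (Fin n),
        (∀ j, (S j).card = s / 2) ∧
          ∀ j k, j ≠ k → ((S j ∩ S k).card : ℝ) < (s : ℝ) / 4 := by
  obtain ⟨k, rfl⟩ := hse
  -- `t = ⌈s / 4⌉`, so that `#(A ∩ B) < t` is exactly `#(A ∩ B) < s / 4`
  set t := (k + 1) / 2
  obtain ⟨F, hFU, hFr, hFmax⟩ :=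
    (powersetCard k (univ : Finset (Fin n))).exists_maximal_pairwise_subset
      (r := fun A B => #(A ∩ B) < t) fun A B h => by rwa [inter_comm] at h
  have hFk : ∀ A ∈ F, #A = k := fun A hA => (mem_powersetCard.1 (hFU hA)).2
  have hcover : ∀ B : Finset (Fin n), #B = k → ∃ A ∈ F, t ≤ #(A ∩ B) := by
    intro B hB
    by_cases hBF : B ∈ F
    · exact ⟨B, hBF, by rw [inter_self, hB]; omega⟩
    · simpa using hFmax B (mem_powersetCard.2 ⟨subset_univ B, hB⟩) hBF
  have hbound : n ^ t ≤ k ^ t * 2 ^ k * #F := by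
    have hcount := choose_le_card_mul_of_forall_exists_le_card_inter hFk hcover
    rw [Fintype.card_fin] at hcount
    exact Nat.pow_le_of_choose_le_mul (by omega) (by omega) hcount
  refine ⟨#F, ?_, fun j => F.equivFin.symm j, fun j => ?_, fun i j hij => ?_⟩
  · have := div_rpow_half_le_of_pow_le (by omega) (by omega) (by omega) hbound
    convert this using 2 <;> push_cast <;> ring
  · rw [hFk _ (F.equivFin.symm j).2]; omega
  · have hsmall : #((F.equivFin.symm i : Finset (Fin n)) ∩ F.equivFin.symm j) < t :=
      hFr (F.equivFin.symm i).2 (F.equivFin.symm j).2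
        fun h => hij (F.equivFin.symm.injective (Subtype.ext h))
    beta_reduce
    rw [lt_div_iff₀ four_pos]
    exact_mod_cast (by omega : _ * 4 < k + k)
end

section
/- Let $0 < s < n$ be integers with $s$ even, and let $U_{s/2} := \{x \in \mathbb{R}^n : x \text{ has at most } s/2 \text{ nonzero coordinates and } \|x\|_2 \le 1\}$. Then for every $0 < \delta < 1/2$, the covering number of $U_{s/2}$ by Euclidean balls of radius $\delta$ centered at points of $U_{s/2}$ satisfies $N(U_{s/2}, \delta) \ge \left(\frac{n}{2s}\right)^{s/4}$. -/
/-!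
Put `k = s / 2` and `m = k / 2 + 1`. A maximal family `P` of `k`-subsets of `Fin n` any two of
which share fewer than `m` points is a Gilbert–Varshamov packing: every `k`-set meets a member of
`P` in at least `m` points, and counting these gives `C(n, m) ≤ |P| C(k, m)²`. The vectors
`1_S / √k`, `S ∈ P`, lie in `U_k` and are pairwise at distance at least `1 > 2δ`, so no `δ`-ball
contains two of them and `N(U_k, δ) ≥ |P|`. Finally
`C(n, m) / C(k, m)² ≥ (n / k)^m / 2^k ≥ (n / 4k)^(k/2)`.
-/

/-- The covering number `N(T, δ)`: the minimal number of closed balls of radius `δ`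
centered at points of `T` needed to cover `T`. -/
noncomputable def coveringNumber {E : Type*} [PseudoMetricSpace E] (T : Set E) (δ : ℝ) : ℕ :=
  sInf {k : ℕ | ∃ F : Finset E, ↑F ⊆ T ∧ T ⊆ (⋃ x ∈ F, Metric.closedBall x δ) ∧ F.card = k}

open Finset Metric

section Covering

variable {E : Type*} [PseudoMetricSpace E] {T : Set E} {δ : ℝ}

theorem exists_finset_card_eq_coveringNumber (hT : TotallyBounded T) (hδ : 0 < δ) :
    ∃ F : Finset E, ↑F ⊆ T ∧ T ⊆ (⋃ x ∈ F, closedBall x δ) ∧ F.card = coveringNumber T δ := by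
  obtain ⟨t, htT, htfin, hcover⟩ := finite_approx_of_totallyBounded hT δ hδ
  refine Nat.sInf_mem (s := {k | ∃ F : Finset E, ↑F ⊆ T ∧ T ⊆ (⋃ x ∈ F, closedBall x δ) ∧
    F.card = k}) ⟨_, htfin.toFinset, by simpa using htT, fun x hx => ?_, rfl⟩
  obtain ⟨y, hy, hxy⟩ := Set.mem_iUnion₂.mp (hcover hx)
  exact Set.mem_iUnion₂.mpr ⟨y, htfin.mem_toFinset.mpr hy, ball_subset_closedBall hxy⟩

theorem card_le_coveringNumber {ι : Type*} (hT : TotallyBounded T) (hδ : 0 < δ)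
    {s : Finset ι} {v : ι → E} (hvT : ∀ i ∈ s, v i ∈ T)
    (hsep : (s : Set ι).Pairwise fun i j => 2 * δ < dist (v i) (v j)) :
    #s ≤ coveringNumber T δ := by
  obtain ⟨F, -, hcover, hF⟩ := exists_finset_card_eq_coveringNumber hT hδ
  rw [← hF]
  refine card_le_card_of_forall_subsingleton (fun i y => dist (v i) y ≤ δ)
    (fun i hi => by simpa using hcover (hvT i hi)) fun y _ i hi j hj => ?_
  by_contra hij
  have := hsep hi.1 hj.1 hij
  linarith [dist_triangle_right (v i) (v j) y, hi.2, hj.2]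

end Covering

section Packing

variable {α : Type*} [Fintype α] [DecidableEq α]

theorem card_filter_powersetCard_le_inter_card (S : Finset α) (k m : ℕ) :
    #{T ∈ powersetCard k univ | m ≤ #(S ∩ T)} ≤
      (#S).choose m * (Fintype.card α - m).choose (k - m) := by
  -- such a `T` is `M ∪ (T \ M)` for an `m`-subset `M` of `S ∩ T`
  have hcover : {T ∈ powersetCard k (univ : Finset α) | m ≤ #(S ∩ T)} ⊆
      (S.powersetCard m).biUnion fun M => ((univ \ M).powersetCard (k - m)).image (M ∪ ·) := by
    intro T hT
    obtain ⟨hTk, hST⟩ := mem_filter.mp hT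
    obtain ⟨M, hM, hMm⟩ := exists_subset_card_eq hST
    have hMT : M ⊆ T := hM.trans inter_subset_right
    refine mem_biUnion.mpr ⟨M, mem_powersetCard.mpr ⟨hM.trans inter_subset_left, hMm⟩,
      mem_image.mpr ⟨T \ M, mem_powersetCard.mpr ⟨sdiff_subset_sdiff (subset_univ T) le_rfl, ?_⟩,
        union_sdiff_of_subset hMT⟩⟩
    rw [card_sdiff_of_subset hMT, (mem_powersetCard.mp hTk).2, hMm]
  calc _ ≤ _ := card_le_card hcover
    _ ≤ #(S.powersetCard m) * (Fintype.card α - m).choose (k - m) :=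
        card_biUnion_le_card_mul _ _ _ fun M hM => card_image_le.trans_eq <| by
          rw [card_powersetCard, card_univ_sdiff, (mem_powersetCard.mp hM).2]
    _ = _ := by rw [card_powersetCard]

theorem exists_packing_powersetCard {k m : ℕ} (hmk : m ≤ k) :
    ∃ P ⊆ powersetCard k (univ : Finset α),
      (P : Set (Finset α)).Pairwise (fun S T => #(S ∩ T) < m) ∧
      (Fintype.card α).choose k ≤ #P * (k.choose m * (Fintype.card α - m).choose (k - m)) := by
  set IsPacking : Finset (Finset α) → Prop :=
    fun P => P ⊆ powersetCard k univ ∧ (P : Set (Finset α)).Pairwise (fun S T => #(S ∩ T) < m)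
  obtain ⟨P, hP, hPmax⟩ := exists_max_image {P ∈ (powersetCard k univ).powerset | IsPacking P}
    card ⟨∅, by simp [IsPacking]⟩
  obtain ⟨hPk, hPsep⟩ := (mem_filter.mp hP).2
  refine ⟨P, hPk, hPsep, ?_⟩
  have hnear : ∀ T ∈ powersetCard k univ, ∃ S ∈ P, m ≤ #(S ∩ T) := by
    intro T hT
    by_contra! hfar
    have hTP : T ∉ P := fun hTP => by
      have := hfar T hTP
      rw [inter_self, (mem_powersetCard.mp hT).2] at this
      omega
    have hins : IsPacking (insert T P) := ⟨insert_subset hT hPk, by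
      rw [coe_insert]
      exact hPsep.insert fun S hS _ => ⟨by rw [inter_comm]; exact hfar S hS, hfar S hS⟩⟩
    have := hPmax _ (mem_filter.mpr ⟨mem_powerset.mpr hins.1, hins⟩)
    rw [card_insert_of_notMem hTP] at this
    omega
  calc (Fintype.card α).choose k = #(powersetCard k (univ : Finset α)) := by
        rw [card_powersetCard, card_univ]
    _ ≤ #(P.biUnion fun S => {T ∈ powersetCard k univ | m ≤ #(S ∩ T)}) := card_le_card
        fun T hT => by simpa [hT] using hnear T hT
    _ ≤ #P * (k.choose m * (Fintype.card α - m).choose (k - m)) :=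
        card_biUnion_le_card_mul _ _ _ fun S hS => by
          simpa [(mem_powersetCard.mp (hPk hS)).2] using
            card_filter_powersetCard_le_inter_card S k m

end Packing

section NormalizedIndicator

variable {ι : Type*} [DecidableEq ι]

noncomputable def normalizedIndicator (k : ℕ) (S : Finset ι) : EuclideanSpace ℝ ι :=
  WithLp.toLp 2 fun i => if i ∈ S then (√k)⁻¹ else 0

theorem normalizedIndicator_apply (k : ℕ) (S : Finset ι) (i : ι) :
    normalizedIndicator k S i = if i ∈ S then (√k)⁻¹ else 0 := rfl

theorem support_normalizedIndicator {k : ℕ} (hk : k ≠ 0) (S : Finset ι) :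
    {i | normalizedIndicator k S i ≠ 0} = S := by
  ext i
  by_cases hi : i ∈ S <;> simp [normalizedIndicator_apply, hi, hk]

variable [Fintype ι]

theorem inner_normalizedIndicator (k : ℕ) (S T : Finset ι) :
    inner ℝ (normalizedIndicator k S) (normalizedIndicator k T) = #(S ∩ T) / k := by
  simp only [PiLp.inner_apply, normalizedIndicator_apply, RCLike.inner_apply, Real.ringHom_apply,
    mul_ite, ite_mul, zero_mul, mul_zero, sum_ite_mem, univ_inter, sum_const, nsmul_eq_mul]
  rw [← mul_inv, Real.mul_self_sqrt k.cast_nonneg, div_eq_mul_inv]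

theorem norm_normalizedIndicator {k : ℕ} (hk : k ≠ 0) {S : Finset ι} (hS : #S = k) :
    ‖normalizedIndicator k S‖ = 1 := by
  rw [norm_eq_sqrt_real_inner, inner_normalizedIndicator, inter_self, hS,
    div_self (by exact_mod_cast hk), Real.sqrt_one]

theorem one_le_dist_normalizedIndicator {k : ℕ} (hk : 0 < k) {S T : Finset ι}
    (hS : #S = k) (hT : #T = k) (hST : 2 * #(S ∩ T) ≤ k) :
    1 ≤ dist (normalizedIndicator k S) (normalizedIndicator k T) := by
  have hk' : (0 : ℝ) < k := by exact_mod_cast hk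
  have hST' : 2 * (#(S ∩ T) : ℝ) ≤ k := by exact_mod_cast hST
  rw [← one_le_sq_iff₀ dist_nonneg, dist_eq_norm, norm_sub_sq_real, inner_normalizedIndicator,
    norm_normalizedIndicator hk.ne' hS, norm_normalizedIndicator hk.ne' hT]
  have : 2 * (#(S ∩ T) / k : ℝ) ≤ 1 := by rw [mul_div_assoc', div_le_one hk']; exact hST'
  linarith

end NormalizedIndicator

section Binomial

theorem Nat.pow_mul_descFactorial_le {n k : ℕ} (hkn : k ≤ n) :
    ∀ m, n ^ m * k.descFactorial m ≤ k ^ m * n.descFactorial m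
  | 0 => by simp
  | m + 1 => by
    have hstep : n * (k - m) ≤ k * (n - m) := by
      rw [Nat.mul_sub, Nat.mul_sub, Nat.mul_comm n k]
      exact Nat.sub_le_sub_left (Nat.mul_le_mul_right m hkn) _
    calc n ^ (m + 1) * k.descFactorial (m + 1)
        = (n * (k - m)) * (n ^ m * k.descFactorial m) := by
          rw [descFactorial_succ, Nat.pow_succ]; ring
      _ ≤ (k * (n - m)) * (k ^ m * n.descFactorial m) :=
          Nat.mul_le_mul hstep (pow_mul_descFactorial_le hkn m)
      _ = k ^ (m + 1) * n.descFactorial (m + 1) := by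
          rw [descFactorial_succ, Nat.pow_succ]; ring

theorem Nat.pow_mul_choose_le {n k : ℕ} (hkn : k ≤ n) (m : ℕ) :
    n ^ m * k.choose m ≤ k ^ m * n.choose m := by
  refine Nat.le_of_mul_le_mul_left ?_ m.factorial_pos
  have := pow_mul_descFactorial_le hkn m
  rw [descFactorial_eq_factorial_mul_choose, descFactorial_eq_factorial_mul_choose] at this
  linarith

theorem Nat.choose_le_mul_choose_sq {n k m p : ℕ} (hmk : m ≤ k) (hkn : k ≤ n)
    (h : n.choose k ≤ p * (k.choose m * (n - m).choose (k - m))) :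
    n.choose m ≤ p * k.choose m ^ 2 := by
  refine Nat.le_of_mul_le_mul_right ?_ (Nat.choose_pos (Nat.sub_le_sub_right hkn m))
  calc n.choose m * (n - m).choose (k - m) = n.choose k * k.choose m := (choose_mul hmk).symm
    _ ≤ p * (k.choose m * (n - m).choose (k - m)) * k.choose m := Nat.mul_le_mul_right _ h
    _ = p * k.choose m ^ 2 * (n - m).choose (k - m) := by ring

theorem rpow_le_of_choose_le_mul_choose_sq {n k p : ℕ} (hk : 0 < k) (hkn : k ≤ n)
    (h : n.choose (k / 2 + 1) ≤ p * k.choose (k / 2 + 1) ^ 2) :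
    ((n : ℝ) / (4 * k)) ^ ((k : ℝ) / 2) ≤ p := by
  set m := k / 2 + 1
  set q : ℝ := n / k
  have hk' : (0 : ℝ) < k := by exact_mod_cast hk
  have hq : 1 ≤ q := by rw [one_le_div hk']; exact_mod_cast hkn
  have hc : 0 < (k.choose m : ℝ) := by exact_mod_cast Nat.choose_pos (by omega : m ≤ k)
  have hc2 : (k.choose m : ℝ) ≤ 2 ^ k := by exact_mod_cast Nat.choose_le_two_pow k m
  have hqc : q ^ m * (k.choose m : ℝ) ≤ n.choose m := by
    rw [div_pow, div_mul_eq_mul_div, div_le_iff₀ (by positivity), mul_comm _ ((k : ℝ) ^ m)]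
    exact_mod_cast Nat.pow_mul_choose_le hkn m
  have hsplit : ((n : ℝ) / (4 * k)) ^ ((k : ℝ) / 2) = q ^ ((k : ℝ) / 2) / 2 ^ k := by
    rw [mul_comm, ← div_div, Real.div_rpow (by positivity) (by norm_num),
      show (4 : ℝ) = 2 ^ (2 : ℝ) by norm_num, ← Real.rpow_mul (by norm_num),
      mul_div_cancel₀ _ two_ne_zero, Real.rpow_natCast]
  have hmono : q ^ ((k : ℝ) / 2) ≤ q ^ m := by
    rw [← Real.rpow_natCast]
    refine Real.rpow_le_rpow_of_exponent_le hq ?_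
    rw [div_le_iff₀ two_pos]
    exact_mod_cast (by omega : k ≤ m * 2)
  calc ((n : ℝ) / (4 * k)) ^ ((k : ℝ) / 2) = q ^ ((k : ℝ) / 2) / 2 ^ k := hsplit
    _ ≤ q ^ m / (k.choose m : ℝ) := div_le_div₀ (by positivity) hmono hc hc2
    _ = q ^ m * (k.choose m : ℝ) / (k.choose m : ℝ) ^ 2 := by field_simp
    _ ≤ n.choose m / (k.choose m : ℝ) ^ 2 := by gcongr
    _ ≤ p := by rw [div_le_iff₀ (by positivity)]; exact_mod_cast h

end Binomial

/-- Covering number lower bound for the set of `(s/2)`-sparse vectors of norm at most one: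
for every `0 < δ < 1/2`, `N(U_{s/2}, δ) ≥ (n/2s)^{s/4}`. -/
theorem sparse_vectors_covering_number_lower_bound
    (s n : ℕ) (hs : 0 < s) (hsn : s < n) (hse : Even s) (δ : ℝ) (hδ0 : 0 < δ)
    (hδ : δ < 1 / 2) :
    ((n : ℝ) / (2 * s)) ^ ((s : ℝ) / 4) ≤
      (coveringNumber {x : EuclideanSpace ℝ (Fin n) |
        {i : Fin n | x i ≠ 0}.ncard ≤ s / 2 ∧ ‖x‖ ≤ 1} δ : ℝ) := by
  obtain ⟨k, rfl⟩ := hse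
  have hk : 0 < k := by omega
  have hkn : k ≤ n := by omega
  obtain ⟨P, hPk, hPsep, hPcount⟩ :=
    exists_packing_powersetCard (α := Fin n) (k := k) (m := k / 2 + 1) (by omega)
  rw [Fintype.card_fin] at hPcount
  have hPcard : ∀ S ∈ P, #S = k := fun S hS => (mem_powersetCard.mp (hPk hS)).2
  set U := {x : EuclideanSpace ℝ (Fin n) | {i : Fin n | x i ≠ 0}.ncard ≤ (k + k) / 2 ∧ ‖x‖ ≤ 1}
  have hU : TotallyBounded U :=
    (isCompact_closedBall 0 1).totallyBounded.subset fun x hx => mem_closedBall_zero_iff.mpr hx.2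
  have hPU : #P ≤ coveringNumber U δ := by
    refine card_le_coveringNumber hU hδ0 (v := normalizedIndicator k) (fun S hS => ⟨?_, ?_⟩)
      fun S hS T hT hST => ?_
    · rw [support_normalizedIndicator hk.ne', Set.ncard_coe_finset, hPcard S hS]
      omega
    · exact (norm_normalizedIndicator hk.ne' (hPcard S hS)).le
    · have := hPsep hS hT hST
      exact (by linarith : 2 * δ < 1).trans_le
        (one_le_dist_normalizedIndicator hk (hPcard S hS) (hPcard T hT) (by omega))
  calc _ = ((n : ℝ) / (4 * k)) ^ ((k : ℝ) / 2) := by push_cast; ring_nf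
    _ ≤ #P := rpow_le_of_choose_le_mul_choose_sq hk hkn
          (Nat.choose_le_mul_choose_sq (by omega) hkn hPcount)
    _ ≤ coveringNumber U δ := by exact_mod_cast hPU
end

section
/- There exists a universal constant $C''' > 0$ such that the following holds. Let $0 < s < n$ be integers with $s$ even and $n > 2s$, let $\epsilon \in (0,1)$, let $U_{s/2} := \{x \in \mathbb{R}^n : x \text{ has at most } s/2 \text{ nonzero coordinates and } \|x\|_2 \le 1\}$, and let $f : U_{s/2} \to \mathbb{R}^m$ satisfy $\sqrt{1-\epsilon}\,\|x-y\|_2 \le \|f(x) - f(y)\|_2 \le \sqrt{1+\epsilon}\,\|x-y\|_2$ for all $x, y \in U_{s/2}$. Then $m \ge C''' \frac{1-\epsilon}{1+\epsilon}\, s \log\left(\frac{n}{2s}\right)$. -/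
/-!
Put `k = s / 2`. A greedy (Gilbert–Varshamov) choice gives a family `𝒜` of `k`-subsets of
`Fin n` with pairwise intersections of size at most `3k/4` and `log #𝒜 ≥ (3/4) k log (n/4k)`.
The normalized indicators `1_T / √k`, `T ∈ 𝒜`, lie in `U_k` and are pairwise at distance at
least `1/2`, so their images under `f` are `√(1-ε)/2`-separated and lie within `√(1+ε)` of
`f 0`. Comparing the volume of the disjoint balls around them with that of a ball containing
them all gives `log #𝒜 ≤ 4 m √(1+ε)/√(1-ε) ≤ 4 m (1+ε)/(1-ε)`, so `C''' = 3/32` works.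
-/

open Finset Real MeasureTheory Metric Module

theorem Finset.exists_subset_pairwise_not_card_le_mul {α : Type*} [DecidableEq α]
    (U : Finset α) (r : α → α → Prop) [DecidableRel r] (hsymm : ∀ a b, r a b → r b a)
    (hrefl : ∀ a ∈ U, r a a) (B : ℕ) (hB : ∀ a ∈ U, #{b ∈ U | r a b} ≤ B) :
    ∃ 𝒜 ⊆ U, (𝒜 : Set α).Pairwise (fun a b => ¬ r a b) ∧ #U ≤ #𝒜 * B := by
  classical
  obtain ⟨𝒜, h𝒜, hmax⟩ := Finset.exists_max_image
    (U.powerset.filter fun 𝒜 : Finset α => (𝒜 : Set α).Pairwise (fun a b => ¬ r a b)) card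
    ⟨∅, by simp⟩
  rw [mem_filter, mem_powerset] at h𝒜
  obtain ⟨hsub, hpair⟩ := h𝒜
  have hcover : U ⊆ 𝒜.biUnion fun a => {b ∈ U | r a b} := by
    intro b hb
    simp only [mem_biUnion, mem_filter]
    by_cases hb𝒜 : b ∈ 𝒜
    · exact ⟨b, hb𝒜, hb, hrefl b hb⟩
    by_contra! hfar
    have hins : insert b 𝒜 ∈ U.powerset.filter
        fun 𝒜 : Finset α => (𝒜 : Set α).Pairwise (fun a b => ¬ r a b) := by
      rw [mem_filter, mem_powerset, coe_insert, Set.pairwise_insert_of_notMem (by simpa)]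
      exact ⟨insert_subset hb hsub, hpair, fun a ha =>
        ⟨fun h => hfar a ha hb (hsymm _ _ h), hfar a ha hb⟩⟩
    have := hmax _ hins
    rw [card_insert_of_notMem hb𝒜] at this
    omega
  exact ⟨𝒜, hsub, hpair, (card_le_card hcover).trans
    (card_biUnion_le_card_mul _ _ _ fun a ha => hB a (hsub ha))⟩

theorem Nat.choose_le_choose_of_le_of_le_half {n i q : ℕ} (hiq : i ≤ q) (hq : q ≤ n / 2) :
    n.choose i ≤ n.choose q := by
  induction q, hiq using Nat.le_induction with
  | base => rfl
  | succ j _ ih => exact (ih (by omega)).trans (Nat.choose_le_succ_of_lt_half_left (by omega))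

theorem Nat.sub_pow_mul_choose_le_pow_mul_choose_add {n k q d : ℕ} (h : q + d ≤ k) :
    (n - k) ^ d * n.choose q ≤ k ^ d * n.choose (q + d) := by
  induction d with
  | zero => simp
  | succ e ih =>
    have hstep : (n - k) * n.choose (q + e) ≤ k * n.choose (q + e + 1) :=
      calc (n - k) * n.choose (q + e) ≤ (n - (q + e)) * n.choose (q + e) :=
            Nat.mul_le_mul_right _ (by omega)
        _ = (q + e + 1) * n.choose (q + e + 1) := by
            rw [mul_comm, ← Nat.choose_succ_right_eq, mul_comm]
        _ ≤ k * n.choose (q + e + 1) := Nat.mul_le_mul_right _ (by omega)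
    calc (n - k) ^ (e + 1) * n.choose q = (n - k) * ((n - k) ^ e * n.choose q) := by ring
      _ ≤ (n - k) * (k ^ e * n.choose (q + e)) := Nat.mul_le_mul_left _ (ih (by omega))
      _ = k ^ e * ((n - k) * n.choose (q + e)) := by ring
      _ ≤ k ^ e * (k * n.choose (q + e + 1)) := Nat.mul_le_mul_left _ hstep
      _ = k ^ (e + 1) * n.choose (q + (e + 1)) := by rw [← add_assoc]; ring

theorem Finset.card_filter_card_sdiff_le {α : Type*} [Fintype α] [DecidableEq α]
    (S : Finset α) (k : ℕ) {q : ℕ} (hq : q ≤ Fintype.card α / 2) :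
    #{T ∈ powersetCard k univ | #(T \ S) ≤ q} ≤ (Fintype.card α).choose q * 2 ^ #S := by
  set 𝒯 := (powersetCard k (univ : Finset α)).filter fun T => #(T \ S) ≤ q
  have hmem : ∀ T ∈ 𝒯, #T = k ∧ #(T \ S) ≤ q := fun T hT => by
    simpa [𝒯] using hT
  refine (card_le_mul_card_image (f := (· ∩ S)) 𝒯 _ fun A hA => ?_).trans
    (Nat.mul_le_mul_left _ ((card_le_card fun A hA => ?_).trans (card_powerset S).le))
  · obtain ⟨T₀, hT₀, rfl⟩ := mem_image.1 hA
    -- a set in the fibre over `T₀ ∩ S` is determined by its part outside `S`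
    calc #(𝒯.filter fun T => T ∩ S = T₀ ∩ S)
        ≤ #(powersetCard #(T₀ \ S) (univ : Finset α)) := by
          refine card_le_card_of_injOn (· \ S) (fun T hT => ?_) fun T hT T' hT' h => ?_
          · rw [mem_coe, mem_filter] at hT
            have h₁ := card_sdiff_add_card_inter T S
            have h₂ := card_sdiff_add_card_inter T₀ S
            rw [hT.2, (hmem T hT.1).1] at h₁
            rw [(hmem T₀ hT₀).1] at h₂
            rw [mem_coe, mem_powersetCard]
            exact ⟨subset_univ _, by dsimp only; omega⟩
          · rw [mem_coe, mem_filter] at hT hT'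
            rw [← sdiff_union_inter T S, ← sdiff_union_inter T' S, show T \ S = T' \ S from h,
              hT.2, hT'.2]
      _ ≤ (Fintype.card α).choose q := by
          rw [card_powersetCard, card_univ]
          exact Nat.choose_le_choose_of_le_of_le_half (hmem T₀ hT₀).2 hq
  · obtain ⟨T, -, rfl⟩ := mem_image.1 hA
    exact mem_powerset.2 inter_subset_right

theorem three_quarters_mul_log_le_log_of_sub_pow_le {n k N : ℕ} (hk : 0 < k) (hn : 4 * k < n)
    (h : (n - k) ^ (k - k / 4) ≤ N * 2 ^ k * k ^ (k - k / 4)) :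
    3 / 4 * k * log (n / (4 * k)) ≤ log N := by
  have hkR : (0 : ℝ) < k := by exact_mod_cast hk
  have hnR : 4 * (k : ℝ) < n := by exact_mod_cast hn
  set x : ℝ := n / (4 * k)
  set B : ℝ := (n - k) / k
  have hx : 1 < x := by rw [lt_div_iff₀ (by positivity)]; linarith
  have hB : 3 * x ≤ B := by
    rw [mul_div_assoc', div_le_div_iff₀ (by positivity) hkR]
    nlinarith
  have hB0 : 0 < B := by linarith
  have hpow : B ^ (k - k / 4) ≤ N * 2 ^ k := by
    have : ((n - k : ℕ) : ℝ) ^ (k - k / 4) ≤ N * 2 ^ k * k ^ (k - k / 4) := by exact_mod_cast h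
    rw [Nat.cast_sub (by omega)] at this
    rwa [div_pow, div_le_iff₀ (by positivity)]
  have hN : (0 : ℝ) < N :=
    pos_of_mul_pos_left ((pow_pos hB0 _).trans_le hpow) (by positivity)
  have hlog : (k - k / 4 : ℕ) * log B ≤ log N + k * log 2 := by
    rw [← log_pow, ← log_pow, ← log_mul hN.ne' (by positivity)]
    exact log_le_log (pow_pos hB0 _) hpow
  have hlogB : log 3 + log x ≤ log B := by
    rw [← log_mul (by norm_num) (by positivity)]
    exact log_le_log (by positivity) hB
  have hkq : 3 / 4 * (k : ℝ) ≤ (k - k / 4 : ℕ) := by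
    have : (4 * (k / 4 : ℕ) : ℝ) ≤ k := by exact_mod_cast Nat.mul_div_le k 4
    rw [Nat.cast_sub (Nat.div_le_self k 4)]
    linarith
  have h23 : 4 * log 2 ≤ 3 * log 3 := by
    have := log_le_log (by norm_num) (show (2 : ℝ) ^ 4 ≤ 3 ^ 3 by norm_num)
    rwa [log_pow, log_pow] at this
  nlinarith [log_pos hx, log_pos (show (1 : ℝ) < 3 by norm_num)]

theorem exists_finset_pairwise_card_inter_le (n k : ℕ) (hk : 0 < k) (hn : 4 * k < n) :
    ∃ 𝒜 : Finset (Finset (Fin n)), (∀ T ∈ 𝒜, #T = k) ∧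
      (𝒜 : Set (Finset (Fin n))).Pairwise (fun T T' => 4 * #(T ∩ T') ≤ 3 * k) ∧
      3 / 4 * k * log (n / (4 * k)) ≤ log #𝒜 := by
  set q := k / 4
  have hnear : ∀ S T : Finset (Fin n), #T = k → 3 * k < 4 * #(S ∩ T) → #(T \ S) ≤ q := by
    intro S T hT h
    have := card_sdiff_add_card_inter T S
    rw [inter_comm] at h
    omega
  obtain ⟨𝒜, h𝒜U, hfar, hcard⟩ := exists_subset_pairwise_not_card_le_mul
    (powersetCard k (univ : Finset (Fin n))) (fun S T => 3 * k < 4 * #(S ∩ T))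
    (fun S T h => by rwa [inter_comm])
    (fun S hS => by rw [inter_self, (mem_powersetCard.1 hS).2]; omega)
    (n.choose q * 2 ^ k) fun S hS => by
      refine (card_le_card fun T hT => ?_).trans ((card_filter_card_sdiff_le S k
        (q := q) (by rw [Fintype.card_fin]; omega)).trans_eq
        (by rw [Fintype.card_fin, (mem_powersetCard.1 hS).2]))
      rw [mem_filter] at hT ⊢
      exact ⟨hT.1, hnear S T (mem_powersetCard.1 hT.1).2 hT.2⟩
  refine ⟨𝒜, fun T hT => (mem_powersetCard.1 (h𝒜U hT)).2, hfar.imp fun _ _ h => by omega,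
    three_quarters_mul_log_le_log_of_sub_pow_le hk hn ?_⟩
  rw [card_powersetCard, card_univ, Fintype.card_fin] at hcard
  refine Nat.le_of_mul_le_mul_right ?_ (Nat.choose_pos (n := n) (k := q) (by omega))
  calc (n - k) ^ (k - q) * n.choose q ≤ k ^ (k - q) * n.choose k := by
        simpa [show q + (k - q) = k by omega] using
          Nat.sub_pow_mul_choose_le_pow_mul_choose_add (n := n) (q := q) (d := k - q) (by omega)
    _ ≤ k ^ (k - q) * (#𝒜 * (n.choose q * 2 ^ k)) := Nat.mul_le_mul_left _ hcard
    _ = #𝒜 * 2 ^ k * k ^ (k - q) * n.choose q := by ring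

section IndicatorVector

variable {ι : Type*} [DecidableEq ι]

noncomputable def indicatorVector (T : Finset ι) : EuclideanSpace ℝ ι :=
  WithLp.toLp 2 fun i => if i ∈ T then 1 else 0

theorem ncard_support_smul_indicatorVector {c : ℝ} (hc : c ≠ 0) (T : Finset ι) :
    {i | (c • indicatorVector T) i ≠ 0}.ncard = #T := by
  convert Set.ncard_coe_finset T
  ext i
  by_cases hi : i ∈ T <;> simp [indicatorVector, hi, hc]

variable [Fintype ι]

theorem inner_indicatorVector (T T' : Finset ι) :
    inner ℝ (indicatorVector T) (indicatorVector T') = #(T ∩ T') := by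
  simp [indicatorVector, PiLp.inner_apply, sum_ite_mem, univ_inter]

theorem norm_indicatorVector (T : Finset ι) : ‖indicatorVector T‖ = √(#T : ℝ) := by
  rw [norm_eq_sqrt_re_inner (𝕜 := ℝ), RCLike.re_to_real, inner_indicatorVector, inter_self]

theorem norm_indicatorVector_sub_sq (T T' : Finset ι) :
    ‖indicatorVector T - indicatorVector T'‖ ^ 2 = #T + #T' - 2 * #(T ∩ T') := by
  rw [norm_sub_sq_real, inner_indicatorVector, norm_indicatorVector, norm_indicatorVector,
    sq_sqrt (Nat.cast_nonneg _), sq_sqrt (Nat.cast_nonneg _)]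
  ring

theorem norm_inv_sqrt_smul_indicatorVector_le_one {k : ℕ} {T : Finset ι} (hT : #T ≤ k) :
    ‖(√k)⁻¹ • indicatorVector T‖ ≤ 1 := by
  rw [norm_smul, norm_indicatorVector, norm_inv, norm_of_nonneg (sqrt_nonneg _)]
  exact inv_mul_le_one_of_le₀ (sqrt_le_sqrt (by exact_mod_cast hT)) (sqrt_nonneg _)

theorem half_le_norm_inv_sqrt_smul_indicatorVector_sub {k : ℕ} (hk : 0 < k) {T T' : Finset ι}
    (hT : #T = k) (hT' : #T' = k) (h : 4 * #(T ∩ T') ≤ 3 * k) :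
    1 / 2 ≤ ‖(√k)⁻¹ • indicatorVector T - (√k)⁻¹ • indicatorVector T'‖ := by
  have hkR : (0 : ℝ) < k := by exact_mod_cast hk
  have hR : 4 * (#(T ∩ T') : ℝ) ≤ 3 * k := by exact_mod_cast h
  have hsq : 1 / 2 ≤ ‖(√k)⁻¹ • indicatorVector T - (√k)⁻¹ • indicatorVector T'‖ ^ 2 := by
    rw [← smul_sub, norm_smul, mul_pow, norm_indicatorVector_sub_sq, hT, hT', norm_inv,
      norm_of_nonneg (sqrt_nonneg _), inv_pow, sq_sqrt hkR.le, inv_mul_eq_div, le_div_iff₀ hkR]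
    linarith
  nlinarith [norm_nonneg ((√k)⁻¹ • indicatorVector T - (√k)⁻¹ • indicatorVector T')]

end IndicatorVector

theorem card_le_one_add_two_mul_div_pow_finrank {E : Type*} [NormedAddCommGroup E]
    [NormedSpace ℝ E] [FiniteDimensional ℝ E]
    {ι : Type*} (s : Finset ι) (y : ι → E) {d R : ℝ} (hd : 0 < d) (hR : 0 ≤ R)
    (hsep : (s : Set ι).Pairwise fun i j => d ≤ dist (y i) (y j))
    (z : E) (hz : ∀ i ∈ s, dist (y i) z ≤ R) :
    (#s : ℝ) ≤ (1 + 2 * R / d) ^ finrank ℝ E := by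
  borelize E
  set μ : Measure E := Measure.addHaar
  have hball (x : E) {r : ℝ} (hr : 0 < r) := μ.addHaar_ball_of_pos x hr
  have hdisj : (s : Set ι).PairwiseDisjoint fun i => ball (y i) (d / 2) :=
    fun i hi j hj hij => ball_disjoint_ball (by linarith [hsep hi hj hij])
  have hcover : (⋃ i ∈ s, ball (y i) (d / 2)) ⊆ ball z (R + d / 2) := by
    refine Set.iUnion₂_subset fun i hi x hx => ?_
    rw [mem_ball] at hx ⊢
    linarith [dist_triangle x (y i) z, hz i hi]
  have hvol : (#s : ENNReal) * ENNReal.ofReal ((d / 2) ^ finrank ℝ E) * μ (ball 0 1)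
      ≤ ENNReal.ofReal ((R + d / 2) ^ finrank ℝ E) * μ (ball 0 1) :=
    calc (#s : ENNReal) * ENNReal.ofReal ((d / 2) ^ finrank ℝ E) * μ (ball 0 1)
        = ∑ i ∈ s, μ (ball (y i) (d / 2)) := by
          simp only [hball _ (half_pos hd), sum_const, nsmul_eq_mul, mul_assoc]
      _ = μ (⋃ i ∈ s, ball (y i) (d / 2)) :=
          (measure_biUnion_finset hdisj fun _ _ => measurableSet_ball).symm
      _ ≤ μ (ball z (R + d / 2)) := measure_mono hcover
      _ = ENNReal.ofReal ((R + d / 2) ^ finrank ℝ E) * μ (ball 0 1) := hball z (by positivity)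
  rw [ENNReal.mul_le_mul_iff_left (measure_ball_pos μ 0 one_pos).ne' measure_ball_lt_top.ne,
    ← ENNReal.ofReal_natCast, ← ENNReal.ofReal_mul (by positivity),
    ENNReal.ofReal_le_ofReal_iff (by positivity), ← le_div_iff₀ (by positivity), ← div_pow] at hvol
  rwa [show (R + d / 2) / (d / 2) = 1 + 2 * R / d by field_simp; ring] at hvol

theorem log_card_le_of_separated_of_biLipschitz {E F ι : Type*} [NormedAddCommGroup E]
    [NormedAddCommGroup F] [NormedSpace ℝ F] [FiniteDimensional ℝ F]
    {U : Set E} {f : E → F} {a b δ R : ℝ} (ha : 0 < a) (hb : 0 ≤ b) (hδ : 0 < δ) (hR : 0 ≤ R)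
    (hf : ∀ x ∈ U, ∀ y ∈ U, a * ‖x - y‖ ≤ ‖f x - f y‖ ∧ ‖f x - f y‖ ≤ b * ‖x - y‖)
    (s : Finset ι) (x : ι → E) (hxU : ∀ i ∈ s, x i ∈ U) {z : E} (hz : z ∈ U)
    (hxz : ∀ i ∈ s, ‖x i - z‖ ≤ R) (hsep : (s : Set ι).Pairwise fun i j => δ ≤ ‖x i - x j‖) :
    log #s ≤ finrank ℝ F * (2 * (b * R) / (a * δ)) := by
  rcases s.eq_empty_or_nonempty with rfl | hs
  · simp only [card_empty, Nat.cast_zero, log_zero]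
    positivity
  have hsep' : (s : Set ι).Pairwise fun i j => a * δ ≤ dist (f (x i)) (f (x j)) :=
    fun i hi j hj hij => (mul_le_mul_of_nonneg_left (hsep hi hj hij) ha.le).trans
      (dist_eq_norm (f (x i)) _ ▸ (hf _ (hxU i hi) _ (hxU j hj)).1)
  have hbdd (i) (hi : i ∈ s) : dist (f (x i)) (f z) ≤ b * R :=
    (dist_eq_norm (f (x i)) _ ▸ (hf _ (hxU i hi) _ hz).2).trans
      (mul_le_mul_of_nonneg_left (hxz i hi) hb)
  calc log #s ≤ log ((1 + 2 * (b * R) / (a * δ)) ^ finrank ℝ F) :=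
        log_le_log (by exact_mod_cast hs.card_pos) (card_le_one_add_two_mul_div_pow_finrank
          s (f ∘ x) (by positivity) (by positivity) hsep' (f z) hbdd)
    _ ≤ finrank ℝ F * (2 * (b * R) / (a * δ)) := by
        rw [log_pow]
        gcongr
        linarith [log_le_sub_one_of_pos (show 0 < 1 + 2 * (b * R) / (a * δ) by positivity)]

theorem sqrt_one_add_div_sqrt_one_sub_le {ε : ℝ} (hε0 : 0 ≤ ε) (hε1 : ε < 1) :
    √(1 + ε) / √(1 - ε) ≤ (1 + ε) / (1 - ε) := by
  have hb0 : 0 < √(1 - ε) := sqrt_pos.2 (by linarith)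
  have hab : √(1 - ε) ≤ √(1 + ε) := sqrt_le_sqrt (by linarith)
  rw [div_le_div_iff₀ hb0 (by linarith)]
  nth_rewrite 1 [← sq_sqrt (show 0 ≤ 1 - ε by linarith)]
  nth_rewrite 2 [← sq_sqrt (show 0 ≤ 1 + ε by linarith)]
  nlinarith [mul_nonneg (mul_nonneg (sqrt_nonneg (1 + ε)) hb0.le) (sub_nonneg.2 hab)]

/-- RIP-style lower bound: any (possibly nonlinear) map `f : U_{s/2} → ℝ^m` with
`√(1±ε)`-distortion on the `(s/2)`-sparse vectors of norm at most one must have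
`m ≥ C''' ((1-ε)/(1+ε)) s log(n/2s)`. -/
theorem sparse_vectors_embedding_dimension_lower_bound :
    ∃ C''' : ℝ, 0 < C''' ∧
    ∀ (s n m : ℕ), 0 < s → s < n → Even s → 2 * s < n →
    ∀ ε : ℝ, 0 < ε → ε < 1 →
    ∀ f : EuclideanSpace ℝ (Fin n) → EuclideanSpace ℝ (Fin m),
      (∀ x ∈ {x : EuclideanSpace ℝ (Fin n) | {i : Fin n | x i ≠ 0}.ncard ≤ s / 2 ∧ ‖x‖ ≤ 1},
       ∀ y ∈ {x : EuclideanSpace ℝ (Fin n) | {i : Fin n | x i ≠ 0}.ncard ≤ s / 2 ∧ ‖x‖ ≤ 1},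
        Real.sqrt (1 - ε) * ‖x - y‖ ≤ ‖f x - f y‖ ∧
          ‖f x - f y‖ ≤ Real.sqrt (1 + ε) * ‖x - y‖) →
      C''' * ((1 - ε) / (1 + ε)) * (s : ℝ) * Real.log ((n : ℝ) / (2 * s)) ≤ (m : ℝ) := by
  refine ⟨3 / 32, by norm_num, ?_⟩
  intro s n m hs _ hse h2s ε hε0 hε1 f hf
  obtain ⟨k, rfl⟩ := hse.two_dvd
  have hk : 0 < k := by omega
  rw [show 2 * k / 2 = k by omega] at hf
  obtain ⟨𝒜, h𝒜k, h𝒜far, h𝒜log⟩ := exists_finset_pairwise_card_inter_le n k hk (by omega)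
  have hlog := log_card_le_of_separated_of_biLipschitz (sqrt_pos.2 (by linarith))
    (sqrt_nonneg _) (by norm_num : (0 : ℝ) < 1 / 2) zero_le_one hf 𝒜
    (fun T => (√k)⁻¹ • indicatorVector T)
    (fun T hT => ⟨(ncard_support_smul_indicatorVector (by positivity) T).trans_le
      (h𝒜k T hT).le, norm_inv_sqrt_smul_indicatorVector_le_one (h𝒜k T hT).le⟩)
    (z := 0) (by simp)
    (fun T hT => by simpa using norm_inv_sqrt_smul_indicatorVector_le_one (h𝒜k T hT).le)
    (fun T hT T' hT' hne => half_le_norm_inv_sqrt_smul_indicatorVector_sub hk (h𝒜k T hT)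
      (h𝒜k T' hT') (h𝒜far hT hT' hne))
  rw [finrank_euclideanSpace_fin] at hlog
  calc 3 / 32 * ((1 - ε) / (1 + ε)) * ((2 * k : ℕ) : ℝ) * log (n / (2 * (2 * k : ℕ)))
      = (1 - ε) / (1 + ε) / 4 * (3 / 4 * k * log (n / (4 * k))) := by push_cast; ring_nf
    _ ≤ (1 - ε) / (1 + ε) / 4 * (m * (4 * (√(1 + ε) / √(1 - ε)))) := by
        refine mul_le_mul_of_nonneg_left (h𝒜log.trans (hlog.trans_eq ?_)) (by positivity)
        field_simp
        norm_num
    _ ≤ (1 - ε) / (1 + ε) / 4 * (m * (4 * ((1 + ε) / (1 - ε)))) := by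
        gcongr ?_ / _ / _ * (_ * (_ * ?_))
        exact sqrt_one_add_div_sqrt_one_sub_le hε0.le hε1
    _ = m := by
        have : 1 - ε ≠ 0 := by linarith
        field_simp
end

section
/- There exists a universal constant $c > 0$ such that the following holds. Let $d, m \ge 1$ be integers, $r > 0$, $\epsilon \in (0,1)$, let $rB_2^d \subset \mathbb{R}^d$ denote the closed Euclidean ball of radius $r$ centered at the origin, and let $f : rB_2^d \to \mathbb{R}^m$ satisfy $(1-\epsilon)\|x-y\|_2 \le \|f(x)-f(y)\|_2 \le (1+\epsilon)\|x-y\|_2$ for all $x, y \in rB_2^d$. Then $m \ge c \left(\frac{1-\epsilon}{1+\epsilon}\right)^2 d$. -/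
/-- Lower bound for the embedding dimension of a Euclidean ball: any `ε`-distortion embedding
`f : rB₂^d → ℝ^m` must have `m ≥ c ((1-ε)/(1+ε))² d`. -/
theorem ball_embedding_dimension_lower_bound :
    ∃ c : ℝ, 0 < c ∧
    ∀ (d m : ℕ), 1 ≤ d → 1 ≤ m →
    ∀ r : ℝ, 0 < r →
    ∀ ε : ℝ, 0 < ε → ε < 1 →
    ∀ f : EuclideanSpace ℝ (Fin d) → EuclideanSpace ℝ (Fin m),
      (∀ x ∈ Metric.closedBall (0 : EuclideanSpace ℝ (Fin d)) r,
       ∀ y ∈ Metric.closedBall (0 : EuclideanSpace ℝ (Fin d)) r,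
        (1 - ε) * ‖x - y‖ ≤ ‖f x - f y‖ ∧ ‖f x - f y‖ ≤ (1 + ε) * ‖x - y‖) →
      c * ((1 - ε) / (1 + ε)) ^ 2 * (d : ℝ) ≤ (m : ℝ) := by
  refine ⟨1, one_pos, fun d m hd hm r hr ε hε0 hε1 f hf => ?_⟩
  -- First show `d ≤ m` using Hausdorff dimension.
  have hdm : d ≤ m := by
    set s := Metric.closedBall (0 : EuclideanSpace ℝ (Fin d)) r with hs
    -- the restriction of f to s is antilipschitz
    have h1ε : (0:ℝ) < 1 - ε := by linarith
    set K : NNReal := ⟨(1 - ε)⁻¹, by positivity⟩ with hK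
    have hanti : AntilipschitzWith K (fun x : s => f x) := by
      apply AntilipschitzWith.of_le_mul_dist
      intro x y
      have h := (hf x x.2 y y.2).1
      have hxy : dist (x : EuclideanSpace ℝ (Fin d)) y = ‖(x : EuclideanSpace ℝ (Fin d)) - y‖ :=
        dist_eq_norm _ _
      have hfxy : dist (f x) (f y) = ‖f x - f y‖ := dist_eq_norm _ _
      rw [Subtype.dist_eq, hxy, hfxy]
      rw [hK]
      have : (1 - ε) * ‖(x : EuclideanSpace ℝ (Fin d)) - y‖ ≤ ‖f x - f y‖ := h
      calc ‖(x : EuclideanSpace ℝ (Fin d)) - y‖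
          = (1 - ε)⁻¹ * ((1 - ε) * ‖(x : EuclideanSpace ℝ (Fin d)) - y‖) := by
            field_simp
        _ ≤ (1 - ε)⁻¹ * ‖f x - f y‖ := by
            exact mul_le_mul_of_nonneg_left this (by positivity)
    have hdims : dimH s = (d : ENNReal) := by
      have : dimH s = (Module.finrank ℝ (EuclideanSpace ℝ (Fin d)) : ENNReal) :=
        Real.dimH_of_nonempty_interior (by
          rw [interior_closedBall _ hr.ne']
          exact ⟨0, Metric.mem_ball_self hr⟩)
      simpa [finrank_euclideanSpace, Fintype.card_fin] using this
    have hiso : Isometry (fun x : s => (x : EuclideanSpace ℝ (Fin d))) :=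
      isometry_subtype_coe
    have h1 : dimH (Set.univ : Set s) = dimH s := by
      have := hiso.dimH_image Set.univ
      rw [Set.image_univ, Subtype.range_coe] at this
      exact this.symm
    have h2 : dimH (Set.univ : Set s) ≤ dimH ((fun x : s => f x) '' Set.univ) :=
      hanti.le_dimH_image _
    have h3 : dimH ((fun x : s => f x) '' Set.univ) ≤
        dimH (Set.univ : Set (EuclideanSpace ℝ (Fin m))) := dimH_mono (Set.subset_univ _)
    have h4 : dimH (Set.univ : Set (EuclideanSpace ℝ (Fin m))) = (m : ENNReal) := by
      have := Real.dimH_univ_eq_finrank (EuclideanSpace ℝ (Fin m))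
      simpa [finrank_euclideanSpace, Fintype.card_fin] using this
    have : (d : ENNReal) ≤ (m : ENNReal) := by
      rw [← hdims, ← h1]
      exact h2.trans (h3.trans_eq h4)
    exact_mod_cast this
  have hratio : ((1 - ε) / (1 + ε)) ^ 2 ≤ 1 := by
    have h1 : (0:ℝ) < 1 + ε := by linarith
    have : (1 - ε) / (1 + ε) ≤ 1 := by
      rw [div_le_one h1]; linarith
    have hpos : (0:ℝ) ≤ (1 - ε) / (1 + ε) := by
      apply div_nonneg <;> linarith
    nlinarith
  have hcast : (d:ℝ) ≤ m := by exact_mod_cast hdm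
  have hrpos : (0:ℝ) ≤ ((1 - ε) / (1 + ε)) ^ 2 := sq_nonneg _
  have hdnn : (0:ℝ) ≤ d := Nat.cast_nonneg d
  nlinarith [mul_le_of_le_one_left hdnn hratio]
end
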